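/- arXiv:1703.01507 — 5 statements merged into one kernel-verified Lean document; each statement's English description precedes it below -/
import Mathlib

section
/- Let δ ∈ (0, 1/2), let I be a finite index set, and let (x_i)_{i∈I} in ℝⁿ and (x'_i)_{i∈I} in ℝ^{n'} satisfy the (δ, n, n')-pairwise JL condition. Then for every partition 𝔠 of I into nonempty blocks: (1−δ)·J((x_i), 𝔠) ≤ (n/n')·J((x'_i), 𝔠) ≤ (1+δ)·J((x_i), 𝔠). -/
open Finset

variable {I : Type*} [Fintype I] [DecidableEq I]

/-- Centroid of the points indexed by the finite set `C`. -/
noncomputable def centroid {E : Type*} [NormedAddCommGroup E] [NormedSpace ℝ E]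
    (y : I → E) (C : Finset I) : E :=
  (C.card : ℝ)⁻¹ • ∑ i ∈ C, y i

/-- `k`-means cost `J((y_i), 𝔠) = Σ_i ‖y_i − μ_y(𝔠(i))‖²` of a partition, written
as a sum over the blocks. -/
noncomputable def kmeansCost {E : Type*} [NormedAddCommGroup E] [NormedSpace ℝ E]
    (y : I → E) (c : Finpartition (univ : Finset I)) : ℝ :=
  ∑ C ∈ c.parts, ∑ i ∈ C, ‖y i - centroid y C‖ ^ 2

/-- Within-cluster variance `VAR((y_i), C)`. -/
noncomputable def clVar {E : Type*} [NormedAddCommGroup E] [NormedSpace ℝ E]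
    (y : I → E) (C : Finset I) : ℝ :=
  (C.card : ℝ)⁻¹ * ∑ i ∈ C, ‖y i - centroid y C‖ ^ 2

/-- The `(δ, n, n')`-pairwise Johnson–Lindenstrauss condition. -/
def JLpair (n n' : ℕ) (δ : ℝ) {I : Type*} (x : I → EuclideanSpace ℝ (Fin n))
    (x' : I → EuclideanSpace ℝ (Fin n')) : Prop :=
  ∀ i j : I, (1 - δ) * ‖x i - x j‖ ^ 2 ≤ (n : ℝ) / n' * ‖x' i - x' j‖ ^ 2 ∧
    (n : ℝ) / n' * ‖x' i - x' j‖ ^ 2 ≤ (1 + δ) * ‖x i - x j‖ ^ 2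

/-- A partition of `I` into at most `k` (automatically nonempty) blocks is `k`-optimal
for the points `y` if it minimizes the k-means cost among all such partitions. -/
def kOptimal {E : Type*} [NormedAddCommGroup E] [NormedSpace ℝ E] (k : ℕ) (y : I → E)
    (c : Finpartition (univ : Finset I)) : Prop :=
  c.parts.card ≤ k ∧ ∀ d : Finpartition (univ : Finset I), d.parts.card ≤ k →
    kmeansCost y c ≤ kmeansCost y d

/-- A partition is k-means-stable (a local minimum of the k-means algorithm) for points `y`
if every point is at least as close to its own block's centroid as to any other centroid. -/
def kmeansStable {E : Type*} [NormedAddCommGroup E] [NormedSpace ℝ E] (y : I → E)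
    (c : Finpartition (univ : Finset I)) : Prop :=
  ∀ i : I, ∀ Ci ∈ c.parts, i ∈ Ci → ∀ C ∈ c.parts,
    ‖y i - centroid y Ci‖ ≤ ‖y i - centroid y C‖

/-- `p` bounds the cluster spread of `y` with respect to the partition `c`. -/
def spreadBound {E : Type*} [NormedAddCommGroup E] [NormedSpace ℝ E] (p : ℝ) (y : I → E)
    (c : Finpartition (univ : Finset I)) : Prop :=
  ∀ C₁ ∈ c.parts, ∀ C₂ ∈ c.parts, C₁ ≠ C₂ →
    clVar y C₁ * ((C₁.card + C₂.card : ℝ) / C₂.card)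
      + clVar y C₂ * ((C₁.card + C₂.card : ℝ) / C₁.card)
      ≤ p * ‖centroid y C₁ - centroid y C₂‖ ^ 2

/-! The cost of a block `C` equals `(2 |C|)⁻¹ Σ_{i,j ∈ C} ‖y_i − y_j‖²`, because the deviations
from the centroid sum to zero. The cost is thus a nonnegative combination of pairwise squared
distances, and the pairwise JL bounds carry over block by block. -/

theorem sum_sum_norm_sub_sq_eq {ι E : Type*} [NormedAddCommGroup E] [InnerProductSpace ℝ E]
    (u : ι → E) (s : Finset ι) :
    ∑ i ∈ s, ∑ j ∈ s, ‖u i - u j‖ ^ 2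
      = 2 * #s * ∑ i ∈ s, ‖u i‖ ^ 2 - 2 * ‖∑ i ∈ s, u i‖ ^ 2 := by
  simp only [@norm_sub_sq_real, sum_add_distrib, sum_sub_distrib, ← mul_sum,
    ← inner_sum, ← sum_inner, real_inner_self_eq_norm_sq, sum_const, nsmul_eq_mul]
  ring

theorem sum_sub_centroid_eq_zero {ι E : Type*} [NormedAddCommGroup E] [NormedSpace ℝ E]
    (y : ι → E) (C : Finset ι) : ∑ i ∈ C, (y i - centroid y C) = 0 := by
  rcases C.eq_empty_or_nonempty with rfl | hC
  · simp
  have hcard : (#C : ℝ) ≠ 0 := Nat.cast_ne_zero.mpr hC.card_pos.ne'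
  rw [sum_sub_distrib, sum_const, ← Nat.cast_smul_eq_nsmul ℝ, _root_.centroid,
    smul_inv_smul₀ hcard, sub_self]

theorem sum_norm_sub_centroid_sq_eq {ι E : Type*} [NormedAddCommGroup E]
    [InnerProductSpace ℝ E] (y : ι → E) (C : Finset ι) :
    ∑ i ∈ C, ‖y i - centroid y C‖ ^ 2
      = (2 * #C : ℝ)⁻¹ * ∑ i ∈ C, ∑ j ∈ C, ‖y i - y j‖ ^ 2 := by
  rcases C.eq_empty_or_nonempty with rfl | hC
  · simp
  have hcard : (#C : ℝ) ≠ 0 := Nat.cast_ne_zero.mpr hC.card_pos.ne'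
  have h := sum_sum_norm_sub_sq_eq (fun i => y i - centroid y C) C
  simp only [sub_sub_sub_cancel_right, sum_sub_centroid_eq_zero, norm_zero] at h
  rw [h]
  field_simp
  ring

theorem mul_kmeansCost_le_mul_kmeansCost {E F : Type*} [NormedAddCommGroup E]
    [InnerProductSpace ℝ E] [NormedAddCommGroup F] [InnerProductSpace ℝ F]
    {y : I → E} {z : I → F} {a b : ℝ}
    (h : ∀ i j, a * ‖y i - y j‖ ^ 2 ≤ b * ‖z i - z j‖ ^ 2)
    (c : Finpartition (univ : Finset I)) :
    a * kmeansCost y c ≤ b * kmeansCost z c := by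
  simp only [kmeansCost, sum_norm_sub_centroid_sq_eq, mul_sum, mul_left_comm a,
    mul_left_comm b]
  exact sum_le_sum fun C _ => sum_le_sum fun i _ => sum_le_sum fun j _ =>
    mul_le_mul_of_nonneg_left (h i j) (by positivity)

theorem kmeans_cost_preserved_general {n n' : ℕ}
    {δ : ℝ}
    {I : Type*} [Fintype I] [DecidableEq I]
    (x : I → EuclideanSpace ℝ (Fin n)) (x' : I → EuclideanSpace ℝ (Fin n'))
    (hJL : JLpair n n' δ x x') (c : Finpartition (univ : Finset I)) :
    (1 - δ) * kmeansCost x c ≤ (n : ℝ) / n' * kmeansCost x' c ∧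
    (n : ℝ) / n' * kmeansCost x' c ≤ (1 + δ) * kmeansCost x c :=
  ⟨mul_kmeansCost_le_mul_kmeansCost (fun i j => (hJL i j).1) c,
    mul_kmeansCost_le_mul_kmeansCost (fun i j => (hJL i j).2) c⟩

/-- k-means cost is preserved up to `1 ± δ` under a JL projection. -/
theorem kmeans_cost_preserved {n n' : ℕ} (hn'0 : 0 < n') (hn'n : n' < n)
    {δ : ℝ} (hδ0 : 0 < δ) (hδ : δ < 1 / 2)
    {I : Type*} [Fintype I] [DecidableEq I]
    (x : I → EuclideanSpace ℝ (Fin n)) (x' : I → EuclideanSpace ℝ (Fin n'))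
    (hJL : JLpair n n' δ x x') (c : Finpartition (univ : Finset I)) :
    (1 - δ) * kmeansCost x c ≤ (n : ℝ) / n' * kmeansCost x' c ∧
    (n : ℝ) / n' * kmeansCost x' c ≤ (1 + δ) * kmeansCost x c :=
  kmeans_cost_preserved_general x x' hJL c
end

section
/- Let δ ∈ (0, 1/2) and suppose (x_i)_{i∈I} in ℝⁿ and (x'_i)_{i∈I} in ℝ^{n'} satisfy the (δ, n, n')-pairwise JL condition. Let 𝔠* be a partition of I into nonempty blocks that is k-means-stable for (x_i). Suppose α ∈ [0, 1) is such that for every ordered pair of distinct blocks C_a, C_b of 𝔠* and every i ∈ C_a we have ‖x_i − μ_x(C_a)‖ ≤ α·(1/2)‖μ_x(C_a) − μ_x(C_b)‖ (i.e., there is a relative gap g = 2(1−α) between any two clusters), let p > 0 bound the cluster spread of (x_i) with respect to 𝔠*, and assume δ ≤ (1−α²)/((1+2p)+α²). Then 𝔠* is k-means-stable for (x'_i). -/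
open Finset

variable {I : Type*} [Fintype I] [DecidableEq I]

/-!
By the parallel-axis identity, `‖z - μ(C)‖² + VAR(C)` is the mean of the squared distances
from `z` to the points of `C`, and `2 VAR(C)` is the mean pairwise squared distance in `C`.
After scaling by `n/n'`, both are therefore distorted by a factor in `[1 - δ, 1 + δ]`, so the
projected squared distance from `x'_i` to `μ'(C)` lies within `δ ‖x_i - μ(C)‖² + 2δ VAR(C)` of
its original value.
For `i ∈ C₁` and `D = ‖μ(C₁) - μ(C₂)‖`, the gap gives `‖x_i - μ(C₁)‖ ≤ αD/2`,
`‖x_i - μ(C₂)‖ ≥ (1 - α/2) D` and `VAR(C₁) + VAR(C₂) ≤ min(p, α²/2) D²`; the bound on `δ`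
is exactly what keeps the margin `(1 - α) D²` between the two squared distances positive
after the distortion.
-/

/-- The paper's relative gap `g = 2(1 - α)` between the clusters of `c`. -/
def gapBound {E : Type*} [NormedAddCommGroup E] [NormedSpace ℝ E] (α : ℝ) (y : I → E)
    (c : Finpartition (univ : Finset I)) : Prop :=
  ∀ Ca ∈ c.parts, ∀ Cb ∈ c.parts, Ca ≠ Cb → ∀ i ∈ Ca,
    ‖y i - centroid y Ca‖ ≤ α * (1 / 2 * ‖centroid y Ca - centroid y Cb‖)

section Centroid

variable {ι E F : Type*} [NormedAddCommGroup E] [NormedAddCommGroup F]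

lemma sum_sub_centroid [NormedSpace ℝ E] (y : ι → E) {C : Finset ι} (hC : C.Nonempty) :
    ∑ j ∈ C, (y j - centroid y C) = 0 := by
  rw [sum_sub_distrib, sum_const, _root_.centroid, ← Nat.cast_smul_eq_nsmul ℝ, smul_smul,
    mul_inv_cancel₀ (by positivity), one_smul, sub_self]

lemma clVar_nonneg [NormedSpace ℝ E] (y : ι → E) (C : Finset ι) : 0 ≤ clVar y C := by
  unfold clVar
  positivity

lemma card_mul_clVar [NormedSpace ℝ E] (y : ι → E) {C : Finset ι} (hC : C.Nonempty) :
    C.card * clVar y C = ∑ j ∈ C, ‖y j - centroid y C‖ ^ 2 := by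
  rw [clVar, ← mul_assoc, mul_inv_cancel₀ (by positivity), one_mul]

lemma clVar_le_sq [NormedSpace ℝ E] (y : ι → E) {C : Finset ι} (hC : C.Nonempty) {r : ℝ}
    (hr : ∀ j ∈ C, ‖y j - centroid y C‖ ≤ r) : clVar y C ≤ r ^ 2 := by
  have hm : (0 : ℝ) < C.card := by exact_mod_cast hC.card_pos
  rw [← mul_le_mul_iff_right₀ hm, card_mul_clVar y hC, ← nsmul_eq_mul, ← sum_const]
  exact sum_le_sum fun j hj => pow_le_pow_left₀ (norm_nonneg _) (hr j hj) 2

variable [InnerProductSpace ℝ E] [InnerProductSpace ℝ F]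

open RealInnerProductSpace in
lemma sum_norm_sub_sq_eq (y : ι → E) {C : Finset ι} (hC : C.Nonempty) (z : E) :
    ∑ j ∈ C, ‖z - y j‖ ^ 2 = C.card * (‖z - centroid y C‖ ^ 2 + clVar y C) := by
  have expand : ∀ j, ‖z - y j‖ ^ 2 = ‖z - centroid y C‖ ^ 2
      - 2 * ⟪z - centroid y C, y j - centroid y C⟫ + ‖y j - centroid y C‖ ^ 2 := fun j => by
    rw [← norm_sub_sq_real, sub_sub_sub_cancel_right]
  simp_rw [expand, sum_add_distrib, sum_sub_distrib, ← mul_sum, ← inner_sum,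
    sum_sub_centroid y hC, inner_zero_right, ← card_mul_clVar y hC]
  simp only [sum_const, nsmul_eq_mul]
  ring

lemma sum_norm_sub_centroid_sq_add_clVar (y : ι → E) {C : Finset ι} (hC : C.Nonempty) :
    ∑ i ∈ C, (‖y i - centroid y C‖ ^ 2 + clVar y C) = 2 * C.card * clVar y C := by
  rw [sum_add_distrib, ← card_mul_clVar y hC, sum_const, nsmul_eq_mul]
  ring

section Comparison

variable {x : ι → E} {y : ι → F} {a b : ℝ}

lemma mul_norm_sub_centroid_sq_add_clVar_le
    (h : ∀ j k, a * ‖x j - x k‖ ^ 2 ≤ b * ‖y j - y k‖ ^ 2) {C : Finset ι} (hC : C.Nonempty)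
    (i : ι) :
    a * (‖x i - centroid x C‖ ^ 2 + clVar x C)
      ≤ b * (‖y i - centroid y C‖ ^ 2 + clVar y C) := by
  have hm : (0 : ℝ) < C.card := by exact_mod_cast hC.card_pos
  rw [← mul_le_mul_iff_right₀ hm, mul_left_comm, ← sum_norm_sub_sq_eq x hC,
    mul_left_comm, ← sum_norm_sub_sq_eq y hC, mul_sum, mul_sum]
  exact sum_le_sum fun j _ => h i j

lemma mul_clVar_le (h : ∀ j k, a * ‖x j - x k‖ ^ 2 ≤ b * ‖y j - y k‖ ^ 2)
    {C : Finset ι} (hC : C.Nonempty) : a * clVar x C ≤ b * clVar y C := by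
  have hm : (0 : ℝ) < 2 * C.card := by have := hC.card_pos; positivity
  rw [← mul_le_mul_iff_right₀ hm, mul_left_comm, ← sum_norm_sub_centroid_sq_add_clVar x hC,
    mul_left_comm, ← sum_norm_sub_centroid_sq_add_clVar y hC, mul_sum, mul_sum]
  exact sum_le_sum fun i _ => mul_norm_sub_centroid_sq_add_clVar_le h hC i

end Comparison

end Centroid

/-- The paper's bound on `δ`, in the form used with `q = min p (α ^ 2 / 2)`. -/
lemma mul_margin_coeff_le {δ α p q : ℝ} (hδ0 : 0 ≤ δ) (hα0 : 0 ≤ α) (hα1 : α ≤ 1)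
    (hqp : q ≤ p) (hqα : q ≤ α ^ 2 / 2) (hδ : δ * (1 + 2 * p + α ^ 2) ≤ 1 - α ^ 2) :
    δ * (1 - α + α ^ 2 / 2 + 2 * q) ≤ 1 - α := by
  have h : 0 ≤ (1 + α) * (1 - α - δ * (1 - α + α ^ 2 / 2 + 2 * q)) := by
    nlinarith [mul_nonneg hδ0 (sub_nonneg.2 hqp), mul_nonneg hδ0 (sub_nonneg.2 hqα),
      mul_nonneg (mul_nonneg hδ0 (sq_nonneg α)) (sub_nonneg.2 hα1),
      mul_nonneg (mul_nonneg hδ0 hα0) (sub_nonneg.2 hqα)]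
  nlinarith [nonneg_of_mul_nonneg_right h (by linarith)]

lemma one_add_mul_sq_add_le_one_sub_mul_sq {δ α q a b D S : ℝ} (hδ0 : 0 ≤ δ) (hδ1 : δ ≤ 1)
    (hα1 : α ≤ 1) (hD : 0 ≤ D) (ha0 : 0 ≤ a) (ha : a ≤ α * D / 2) (hb : D - a ≤ b)
    (hS : S ≤ q * D ^ 2) (hδ : δ * (1 - α + α ^ 2 / 2 + 2 * q) ≤ 1 - α) :
    (1 + δ) * a ^ 2 + 2 * δ * S ≤ (1 - δ) * b ^ 2 :=
  calc (1 + δ) * a ^ 2 + 2 * δ * S ≤ (1 + δ) * (α * D / 2) ^ 2 + 2 * δ * (q * D ^ 2) := by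
        gcongr
    _ ≤ (1 - δ) * ((1 - α / 2) * D) ^ 2 := by
        nlinarith [mul_nonneg (sub_nonneg.2 hδ) (sq_nonneg D)]
    _ ≤ (1 - δ) * b ^ 2 := by
        have hb' : (1 - α / 2) * D ≤ b := by linarith
        gcongr
        nlinarith [mul_nonneg (sub_nonneg.2 hα1) hD]

section Gap

variable {E : Type*} [NormedAddCommGroup E] [NormedSpace ℝ E] {x : I → E}
  {c : Finpartition (univ : Finset I)} {C₁ C₂ : Finset I}

lemma clVar_le_of_gapBound {α : ℝ} (hgap : gapBound α x c) (h₁ : C₁ ∈ c.parts)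
    (h₂ : C₂ ∈ c.parts) (hne : C₁ ≠ C₂) :
    clVar x C₁ ≤ (α * ‖centroid x C₁ - centroid x C₂‖ / 2) ^ 2 :=
  clVar_le_sq x (c.nonempty_of_mem_parts h₁) fun j hj =>
    (hgap C₁ h₁ C₂ h₂ hne j hj).trans_eq (by ring)

lemma clVar_add_clVar_le_of_spreadBound {p : ℝ} (hspread : spreadBound p x c)
    (h₁ : C₁ ∈ c.parts) (h₂ : C₂ ∈ c.parts) (hne : C₁ ≠ C₂) :
    clVar x C₁ + clVar x C₂ ≤ p * ‖centroid x C₁ - centroid x C₂‖ ^ 2 := by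
  have hm₁ : (0 : ℝ) < C₁.card := by exact_mod_cast (c.nonempty_of_mem_parts h₁).card_pos
  have hm₂ : (0 : ℝ) < C₂.card := by exact_mod_cast (c.nonempty_of_mem_parts h₂).card_pos
  refine le_trans (add_le_add ?_ ?_) (hspread C₁ h₁ C₂ h₂ hne)
  · exact le_mul_of_one_le_right (clVar_nonneg x C₁) ((one_le_div hm₂).2 (by linarith))
  · exact le_mul_of_one_le_right (clVar_nonneg x C₂) ((one_le_div hm₁).2 (by linarith))

lemma one_add_mul_norm_sub_centroid_sq_add_le {α p δ : ℝ} (hα0 : 0 ≤ α) (hα1 : α ≤ 1)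
    (hgap : gapBound α x c) (hp : 0 ≤ p) (hspread : spreadBound p x c) (hδ0 : 0 ≤ δ)
    (hδ : δ * (1 + 2 * p + α ^ 2) ≤ 1 - α ^ 2) (h₁ : C₁ ∈ c.parts) (h₂ : C₂ ∈ c.parts)
    (hne : C₁ ≠ C₂) {i : I} (hi : i ∈ C₁) :
    (1 + δ) * ‖x i - centroid x C₁‖ ^ 2 + 2 * δ * (clVar x C₁ + clVar x C₂)
      ≤ (1 - δ) * ‖x i - centroid x C₂‖ ^ 2 := by
  set D := ‖centroid x C₁ - centroid x C₂‖
  have ha : ‖x i - centroid x C₁‖ ≤ α * D / 2 :=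
    (hgap C₁ h₁ C₂ h₂ hne i hi).trans_eq (by ring)
  have hb : D - ‖x i - centroid x C₁‖ ≤ ‖x i - centroid x C₂‖ := by
    rw [sub_le_iff_le_add', ← norm_neg (x i - _)]
    exact (norm_add_le _ _).trans_eq' (by rw [neg_sub, sub_add_sub_cancel])
  have hV₂ : clVar x C₂ ≤ (α * D / 2) ^ 2 := by
    simpa only [D, norm_sub_rev] using clVar_le_of_gapBound hgap h₂ h₁ hne.symm
  have hV : clVar x C₁ + clVar x C₂ ≤ min p (α ^ 2 / 2) * D ^ 2 := by
    rw [min_mul_of_nonneg _ _ (sq_nonneg D)]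
    refine le_min (clVar_add_clVar_le_of_spreadBound hspread h₁ h₂ hne) ?_
    nlinarith [clVar_le_of_gapBound hgap h₁ h₂ hne]
  have hδ1 : δ ≤ 1 := by
    nlinarith [mul_nonneg hδ0 (add_nonneg (mul_nonneg zero_le_two hp) (sq_nonneg α))]
  exact one_add_mul_sq_add_le_one_sub_mul_sq hδ0 hδ1 hα1 (norm_nonneg _) (norm_nonneg _) ha hb hV
    (mul_margin_coeff_le hδ0 hα0 hα1 (min_le_left _ _) (min_le_right _ _) hδ)

end Gap

theorem kmeansStable_of_pairwise_distortion {E F : Type*} [NormedAddCommGroup E]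
    [InnerProductSpace ℝ E] [NormedAddCommGroup F] [InnerProductSpace ℝ F]
    {x : I → E} {y : I → F} {s δ : ℝ} (hs : 0 < s)
    (hlo : ∀ i j, (1 - δ) * ‖x i - x j‖ ^ 2 ≤ s * ‖y i - y j‖ ^ 2)
    (hup : ∀ i j, s * ‖y i - y j‖ ^ 2 ≤ (1 + δ) * ‖x i - x j‖ ^ 2)
    {c : Finpartition (univ : Finset I)} {α p : ℝ} (hα0 : 0 ≤ α) (hα1 : α ≤ 1)
    (hgap : gapBound α x c) (hp : 0 ≤ p) (hspread : spreadBound p x c) (hδ0 : 0 ≤ δ)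
    (hδ : δ * (1 + 2 * p + α ^ 2) ≤ 1 - α ^ 2) :
    kmeansStable y c := by
  intro i C₁ h₁ hi C₂ h₂
  rcases eq_or_ne C₁ C₂ with rfl | hne
  · rfl
  have hC₁ := c.nonempty_of_mem_parts h₁
  have hC₂ := c.nonempty_of_mem_parts h₂
  have margin :=
    one_add_mul_norm_sub_centroid_sq_add_le hα0 hα1 hgap hp hspread hδ0 hδ h₁ h₂ hne hi
  have upper : s * ‖y i - centroid y C₁‖ ^ 2
      ≤ (1 + δ) * ‖x i - centroid x C₁‖ ^ 2 + 2 * δ * clVar x C₁ := by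
    linarith [mul_norm_sub_centroid_sq_add_clVar_le hup hC₁ i, mul_clVar_le hlo hC₁]
  have lower : (1 - δ) * ‖x i - centroid x C₂‖ ^ 2 - 2 * δ * clVar x C₂
      ≤ s * ‖y i - centroid y C₂‖ ^ 2 := by
    linarith [mul_norm_sub_centroid_sq_add_clVar_le hlo hC₂ i, mul_clVar_le hup hC₂]
  have hsq : s * ‖y i - centroid y C₁‖ ^ 2 ≤ s * ‖y i - centroid y C₂‖ ^ 2 := by linarith
  exact (pow_le_pow_iff_left₀ (norm_nonneg _) (norm_nonneg _) two_ne_zero).1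
    (le_of_mul_le_mul_left hsq hs)

theorem local_min_projected_general {n n' : ℕ} (hn'0 : 0 < n') (hn'n : n' < n)
    {δ : ℝ} (hδ0 : 0 < δ)
    {I : Type*} [Fintype I] [DecidableEq I]
    (x : I → EuclideanSpace ℝ (Fin n)) (x' : I → EuclideanSpace ℝ (Fin n'))
    (hJL : JLpair n n' δ x x')
    (cstar : Finpartition (univ : Finset I))
    (α : ℝ) (hα0 : 0 ≤ α) (hα1 : α < 1)
    (hgap : ∀ Ca ∈ cstar.parts, ∀ Cb ∈ cstar.parts, Ca ≠ Cb → ∀ i ∈ Ca,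
      ‖x i - centroid x Ca‖ ≤ α * (1 / 2 * ‖centroid x Ca - centroid x Cb‖))
    (p : ℝ) (hp : 0 < p) (hspread : spreadBound p x cstar)
    (hδα : δ ≤ (1 - α ^ 2) / ((1 + 2 * p) + α ^ 2)) :
    kmeansStable x' cstar := by
  have hn : (0 : ℝ) < n := by exact_mod_cast hn'0.trans hn'n
  have hn' : (0 : ℝ) < n' := by exact_mod_cast hn'0
  rw [le_div_iff₀ (by positivity)] at hδα
  exact kmeansStable_of_pairwise_distortion (div_pos hn hn') (fun i j => (hJL i j).1)
    (fun i j => (hJL i j).2) hα0 hα1.le hgap hp.le hspread hδ0.le hδα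

/-- A k-means local minimum in the original space remains a local minimum in the projected
space, provided there is a relative gap `g = 2(1−α)` between any two clusters, the cluster
spread is bounded by `p`, and `δ ≤ (1−α²)/((1+2p)+α²)`. -/
theorem local_min_projected {n n' : ℕ} (hn'0 : 0 < n') (hn'n : n' < n)
    {δ : ℝ} (hδ0 : 0 < δ) (hδ : δ < 1 / 2)
    {I : Type*} [Fintype I] [DecidableEq I]
    (x : I → EuclideanSpace ℝ (Fin n)) (x' : I → EuclideanSpace ℝ (Fin n'))
    (hJL : JLpair n n' δ x x')
    (cstar : Finpartition (univ : Finset I)) (hstable : kmeansStable x cstar)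
    (α : ℝ) (hα0 : 0 ≤ α) (hα1 : α < 1)
    (hgap : ∀ Ca ∈ cstar.parts, ∀ Cb ∈ cstar.parts, Ca ≠ Cb → ∀ i ∈ Ca,
      ‖x i - centroid x Ca‖ ≤ α * (1 / 2 * ‖centroid x Ca - centroid x Cb‖))
    (p : ℝ) (hp : 0 < p) (hspread : spreadBound p x cstar)
    (hδα : δ ≤ (1 - α ^ 2) / ((1 + 2 * p) + α ^ 2)) :
    kmeansStable x' cstar :=
  local_min_projected_general hn'0 hn'n hδ0 x x' hJL cstar α hα0 hα1 hgap p hp hspread hδα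
end

section
/- Let δ ∈ (0, 1/2) and suppose (x_i)_{i∈I} in ℝⁿ and (x'_i)_{i∈I} in ℝ^{n'} satisfy the (δ, n, n')-pairwise JL condition. Let k ≥ 1, c > 1, σ > 0, and let d be any real-valued function on pairs of partitions of I. Suppose (x_i) has the (c, σ)-approximation-stability property with respect to d: for all partitions A, B of I into at most k nonempty blocks, if J((x_i), A) < c·J((x_i), B) and J((x_i), B) < c·J((x_i), A), then d(A, B) ≤ σ. Then (x'_i) has the (c·(1−δ)/(1+δ), σ)-approximation-stability property: for all such partitions A, B, if J((x'_i), A) < c·((1−δ)/(1+δ))·J((x'_i), B) and J((x'_i), B) < c·((1−δ)/(1+δ))·J((x'_i), A), then d(A, B) ≤ σ. -/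
/-! The k-means cost of a partition is `∑ C, (2|C|)⁻¹ ∑ i ∈ C, ∑ j ∈ C, ‖y i - y j‖²`, a
nonnegative combination of squared pairwise distances. The JL condition therefore squeezes
`(n/n') J(x', 𝔠)` between `(1-δ) J(x, 𝔠)` and `(1+δ) J(x, 𝔠)` for every partition `𝔠`, so a
ratio of projected costs below `c (1-δ)/(1+δ)` forces the ratio of original costs below `c`. -/

open Finset

variable {I : Type*} [Fintype I] [DecidableEq I]

section BlockIdentity

variable {E : Type*} [NormedAddCommGroup E] [InnerProductSpace ℝ E] {ι : Type*}

lemma sum_norm_sub_centroid_sq (y : ι → E) (C : Finset ι) :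
    ∑ i ∈ C, ‖y i - _root_.centroid y C‖ ^ 2
      = ∑ i ∈ C, ‖y i‖ ^ 2 - (C.card : ℝ)⁻¹ * ‖∑ i ∈ C, y i‖ ^ 2 := by
  have h_inner : ∑ i ∈ C, inner ℝ (y i) (_root_.centroid y C)
      = (C.card : ℝ)⁻¹ * ‖∑ i ∈ C, y i‖ ^ 2 := by
    rw [← sum_inner, _root_.centroid, real_inner_smul_right, real_inner_self_eq_norm_sq]
  have h_norm : ‖_root_.centroid y C‖ ^ 2 = (C.card : ℝ)⁻¹ ^ 2 * ‖∑ i ∈ C, y i‖ ^ 2 := by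
    rw [_root_.centroid, norm_smul, mul_pow, Real.norm_eq_abs, sq_abs]
  simp only [norm_sub_sq_real, sum_add_distrib, sum_sub_distrib, ← mul_sum, h_inner, sum_const,
    nsmul_eq_mul, h_norm]
  rcases C.eq_empty_or_nonempty with rfl | hC
  · simp
  · have : (C.card : ℝ) ≠ 0 := by exact_mod_cast hC.card_pos.ne'
    field_simp
    ring

lemma sum_sum_norm_sub_sq (y : ι → E) (C : Finset ι) :
    ∑ i ∈ C, ∑ j ∈ C, ‖y i - y j‖ ^ 2
      = 2 * C.card * ∑ i ∈ C, ‖y i‖ ^ 2 - 2 * ‖∑ i ∈ C, y i‖ ^ 2 := by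
  simp only [norm_sub_sq_real, sum_add_distrib, sum_sub_distrib, ← mul_sum, ← inner_sum,
    ← sum_inner, real_inner_self_eq_norm_sq, sum_const, nsmul_eq_mul]
  ring

lemma sum_norm_sub_centroid_sq_eq_sum_sum (y : ι → E) (C : Finset ι) :
    ∑ i ∈ C, ‖y i - _root_.centroid y C‖ ^ 2
      = (2 * C.card : ℝ)⁻¹ * ∑ i ∈ C, ∑ j ∈ C, ‖y i - y j‖ ^ 2 := by
  rw [sum_norm_sub_centroid_sq, sum_sum_norm_sub_sq]
  rcases C.eq_empty_or_nonempty with rfl | hC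
  · simp
  · have : (C.card : ℝ) ≠ 0 := by exact_mod_cast hC.card_pos.ne'
    field_simp

end BlockIdentity

section KMeansCost

variable {E F : Type*} [NormedAddCommGroup E] [InnerProductSpace ℝ E]
  [NormedAddCommGroup F] [InnerProductSpace ℝ F]

lemma kmeansCost_eq_sum_sum (y : I → E) (A : Finpartition (univ : Finset I)) :
    kmeansCost y A
      = ∑ C ∈ A.parts, (2 * C.card : ℝ)⁻¹ * ∑ i ∈ C, ∑ j ∈ C, ‖y i - y j‖ ^ 2 :=
  sum_congr rfl fun C _ => sum_norm_sub_centroid_sq_eq_sum_sum y C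

lemma mul_kmeansCost_le_of_forall {a b : ℝ} {y : I → E} {z : I → F}
    (h : ∀ i j, a * ‖y i - y j‖ ^ 2 ≤ b * ‖z i - z j‖ ^ 2) (A : Finpartition (univ : Finset I)) :
    a * kmeansCost y A ≤ b * kmeansCost z A := by
  simp only [kmeansCost_eq_sum_sum, mul_sum, mul_left_comm a, mul_left_comm b]
  exact sum_le_sum fun C _ => sum_le_sum fun i _ => sum_le_sum fun j _ =>
    mul_le_mul_of_nonneg_left (h i j) (by positivity)

end KMeansCost

lemma lt_mul_of_lt_mul_div_of_le_of_le {a b a' b' r c α β : ℝ} (hr : 0 < r) (hα : 0 < α)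
    (hβ : 0 < β) (hc : 0 ≤ c) (ha : α * a ≤ r * a') (hb : r * b' ≤ β * b)
    (h : a' < c * (α / β) * b') :
    a < c * b := by
  have : α * a < α * (c * b) :=
    calc α * a ≤ r * a' := ha
      _ < r * (c * (α / β) * b') := mul_lt_mul_of_pos_left h hr
      _ = c * (α / β) * (r * b') := by ring
      _ ≤ c * (α / β) * (β * b) := by gcongr
      _ = α * (c * b) := by field_simp
  exact lt_of_mul_lt_mul_left this hα.le

theorem approximation_stability_preserved_general {n n' : ℕ} (hn'0 : 0 < n') (hn'n : n' < n)
    {δ : ℝ} (hδ0 : 0 < δ) (hδ : δ < 1 / 2)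
    {I : Type*} [Fintype I] [DecidableEq I]
    (x : I → EuclideanSpace ℝ (Fin n)) (x' : I → EuclideanSpace ℝ (Fin n'))
    (hJL : JLpair n n' δ x x') (k : ℕ) (c σ : ℝ) (hc : 1 < c)
    (dist : Finpartition (univ : Finset I) → Finpartition (univ : Finset I) → ℝ)
    (hstab : ∀ A B : Finpartition (univ : Finset I),
      A.parts.card ≤ k → B.parts.card ≤ k →
      kmeansCost x A < c * kmeansCost x B → kmeansCost x B < c * kmeansCost x A →
      dist A B ≤ σ) :
    ∀ A B : Finpartition (univ : Finset I),
      A.parts.card ≤ k → B.parts.card ≤ k →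
      kmeansCost x' A < c * ((1 - δ) / (1 + δ)) * kmeansCost x' B →
      kmeansCost x' B < c * ((1 - δ) / (1 + δ)) * kmeansCost x' A →
      dist A B ≤ σ := by
  intro A B hAk hBk hAB hBA
  have hn : 0 < n := hn'0.trans hn'n
  have hr : (0 : ℝ) < n / n' := by positivity
  have lower := mul_kmeansCost_le_of_forall fun i j => (hJL i j).1
  have upper := mul_kmeansCost_le_of_forall fun i j => (hJL i j).2
  have transfer := fun {P Q : Finpartition (univ : Finset I)}
      (h : kmeansCost x' P < c * ((1 - δ) / (1 + δ)) * kmeansCost x' Q) =>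
    lt_mul_of_lt_mul_div_of_le_of_le hr (by linarith) (by linarith) (by linarith)
      (lower P) (upper Q) h
  exact hstab A B hAk hBk (transfer hAB) (transfer hBA)

/-- (c, σ)-approximation-stability is transmitted to the projected space, with the factor
`c` weakened to `c·(1−δ)/(1+δ)`. -/
theorem approximation_stability_preserved {n n' : ℕ} (hn'0 : 0 < n') (hn'n : n' < n)
    {δ : ℝ} (hδ0 : 0 < δ) (hδ : δ < 1 / 2)
    {I : Type*} [Fintype I] [DecidableEq I]
    (x : I → EuclideanSpace ℝ (Fin n)) (x' : I → EuclideanSpace ℝ (Fin n'))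
    (hJL : JLpair n n' δ x x') (k : ℕ) (hk : 1 ≤ k) (c σ : ℝ) (hc : 1 < c) (hσ : 0 < σ)
    (dist : Finpartition (univ : Finset I) → Finpartition (univ : Finset I) → ℝ)
    (hstab : ∀ A B : Finpartition (univ : Finset I),
      A.parts.card ≤ k → B.parts.card ≤ k →
      kmeansCost x A < c * kmeansCost x B → kmeansCost x B < c * kmeansCost x A →
      dist A B ≤ σ) :
    ∀ A B : Finpartition (univ : Finset I),
      A.parts.card ≤ k → B.parts.card ≤ k →
      kmeansCost x' A < c * ((1 - δ) / (1 + δ)) * kmeansCost x' B →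
      kmeansCost x' B < c * ((1 - δ) / (1 + δ)) * kmeansCost x' A →
      dist A B ≤ σ :=
  approximation_stability_preserved_general hn'0 hn'n hδ0 hδ x x' hJL k c σ hc dist hstab
end

section
/- Let 0 < n' < n be integers and δ ∈ (0, 1) with δ·n' < n − n'. Then μ({x ∈ ℝⁿ : (1−δ)‖x‖² ≤ (n/n')‖x'‖² ≤ (1+δ)‖x‖²}) ≥ 1 − (1−δ)^{n'/2}·(1 + δn'/(n−n'))^{(n−n')/2} − (1+δ)^{n'/2}·(1 − δn'/(n−n'))^{(n−n')/2}. -/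
/-!
Chernoff's method. Since `E exp (c X²) = (1 - 2c)^(-1/2)` for `X ~ N(0,1)` and `c < 1/2`,
Markov's inequality for `exp (∑ (1 - 1/wᵢ) xᵢ² / 2)` gives
`P(∑ xᵢ² / wᵢ ≤ ∑ xᵢ²) ≤ ∏ √wᵢ` for any weights `wᵢ > 0`. Each of the two failure events
`(n/n')‖x'‖² < (1-δ)‖x‖²` and `(1+δ)‖x‖² < (n/n')‖x'‖²` lies in such an event, with weight
`1 ∓ δ` on the first `n'` coordinates and `1 ± δn'/(n-n')` on the others (the optimal Chernoff
parameter), which yields the two error terms.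
-/

open MeasureTheory ProbabilityTheory Real

lemma gaussianPDFReal_zero_one_mul_exp_mul_sq (c x : ℝ) :
    gaussianPDFReal 0 1 x * exp (c * x ^ 2) = (√(2 * π))⁻¹ * exp (-(1 / 2 - c) * x ^ 2) := by
  simp only [gaussianPDFReal, NNReal.coe_one, mul_one, sub_zero]
  rw [mul_assoc, ← exp_add]
  ring_nf

lemma integral_exp_mul_sq_gaussianReal {c : ℝ} (hc : c < 1 / 2) :
    ∫ x, exp (c * x ^ 2) ∂gaussianReal 0 1 = (√(1 - 2 * c))⁻¹ := by
  have h2c : 0 < 1 - 2 * c := by linarith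
  simp_rw [integral_gaussianReal_eq_integral_smul one_ne_zero, smul_eq_mul,
    gaussianPDFReal_zero_one_mul_exp_mul_sq, integral_const_mul, integral_gaussian,
    show π / (1 / 2 - c) = 2 * π / (1 - 2 * c) by field_simp, sqrt_div (by positivity : 0 ≤ 2 * π)]
  have : √(2 * π) ≠ 0 := by positivity
  field_simp

lemma integrable_exp_mul_sq_gaussianReal {c : ℝ} (hc : c < 1 / 2) :
    Integrable (fun x ↦ exp (c * x ^ 2)) (gaussianReal 0 1) :=
  .of_integral_ne_zero <| by
    rw [integral_exp_mul_sq_gaussianReal hc]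
    have : 0 < 1 - 2 * c := by linarith
    positivity

lemma measure_pi_gaussianReal_sum_sq_div_le_sum_sq {ι : Type*} [Fintype ι] {w : ι → ℝ}
    (hw : ∀ i, 0 < w i) :
    Measure.pi (fun _ : ι ↦ gaussianReal 0 1) {x | ∑ i, x i ^ 2 / w i ≤ ∑ i, x i ^ 2} ≤
      ENNReal.ofReal (∏ i, √(w i)) := by
  set c : ι → ℝ := fun i ↦ (1 - (w i)⁻¹) / 2
  have hc : ∀ i, c i < 1 / 2 := fun i ↦ by have := inv_pos.2 (hw i); simp only [c]; linarith
  have hexp (x : ι → ℝ) : exp (1 * ∑ i, c i * x i ^ 2) = ∏ i, exp (c i * x i ^ 2) := by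
    rw [one_mul, exp_sum]
  have hint : Integrable (fun x : ι → ℝ ↦ exp (1 * ∑ i, c i * x i ^ 2))
      (Measure.pi fun _ : ι ↦ gaussianReal 0 1) := by
    simp_rw [hexp]
    exact Integrable.fintype_prod fun i ↦ integrable_exp_mul_sq_gaussianReal (hc i)
  have hmgf : mgf (fun x : ι → ℝ ↦ ∑ i, c i * x i ^ 2)
      (Measure.pi fun _ : ι ↦ gaussianReal 0 1) 1 = ∏ i, √(w i) := by
    rw [mgf]
    simp_rw [hexp, integral_fintype_prod_eq_prod (fun i t ↦ exp (c i * t ^ 2)),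
      integral_exp_mul_sq_gaussianReal (hc _), c]
    refine Finset.prod_congr rfl fun i _ ↦ ?_
    rw [show 1 - 2 * ((1 - (w i)⁻¹) / 2) = (w i)⁻¹ by ring, sqrt_inv, inv_inv]
  have hset : {x : ι → ℝ | ∑ i, x i ^ 2 / w i ≤ ∑ i, x i ^ 2} =
      {x | 0 ≤ ∑ i, c i * x i ^ 2} := by
    have hsum (x : ι → ℝ) : ∑ i, c i * x i ^ 2 = (∑ i, x i ^ 2 - ∑ i, x i ^ 2 / w i) / 2 := by
      rw [← Finset.sum_sub_distrib, Finset.sum_div]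
      exact Finset.sum_congr rfl fun i _ ↦ by simp only [c]; ring
    ext x
    simp only [Set.mem_ofPred_eq, hsum]
    constructor <;> intro <;> linarith
  rw [hset, ← ofReal_measureReal]
  gcongr
  simpa [hmgf] using measure_ge_le_exp_mul_mgf 0 zero_le_one hint

lemma measure_pi_gaussianReal_block_sum_sq_div_le_sum_sq {ι : Type*} [Fintype ι]
    [DecidableEq ι] (s : Finset ι) {p q : ℝ} (hp : 0 < p) (hq : 0 < q) :
    Measure.pi (fun _ : ι ↦ gaussianReal 0 1)
        {x | (∑ i ∈ s, x i ^ 2) / p + (∑ i ∈ sᶜ, x i ^ 2) / q ≤ ∑ i, x i ^ 2} ≤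
      ENNReal.ofReal (√p ^ s.card * √q ^ sᶜ.card) := by
  set w : ι → ℝ := fun i ↦ if i ∈ s then p else q
  have hsum (x : ι → ℝ) :
      ∑ i, x i ^ 2 / w i = (∑ i ∈ s, x i ^ 2) / p + (∑ i ∈ sᶜ, x i ^ 2) / q := by
    rw [← Finset.sum_add_sum_compl s, Finset.sum_div, Finset.sum_div]
    congr 1 <;> refine Finset.sum_congr rfl fun i hi ↦ ?_ <;> simp_all [w]
  have hprod : ∏ i, √(w i) = √p ^ s.card * √q ^ sᶜ.card := by
    rw [← Finset.prod_mul_prod_compl s, ← Finset.prod_const, ← Finset.prod_const]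
    congr 1 <;> refine Finset.prod_congr rfl fun i hi ↦ ?_ <;> simp_all [w]
  simpa only [hsum, hprod] using
    measure_pi_gaussianReal_sum_sq_div_le_sum_sq (w := w) fun i ↦ by
      dsimp only [w]; split_ifs <;> assumption

lemma measure_pi_gaussianReal_head_tail_le {n n' : ℕ} (hn'0 : 0 < n') (hn'n : n' < n) {t : ℝ}
    (ht : -1 < t) (htn : t * n' < (n : ℝ) - n') :
    Measure.pi (fun _ : Fin n ↦ gaussianReal 0 1)
        {x | 0 ≤ t * ((n : ℝ) / n' * ∑ j : Fin n', x (Fin.castLE hn'n.le j) ^ 2 -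
          (1 + t) * ∑ i, x i ^ 2)} ≤
      ENNReal.ofReal ((1 + t) ^ ((n' : ℝ) / 2) *
        (1 - t * n' / ((n : ℝ) - n')) ^ (((n : ℝ) - n') / 2)) := by
  classical
  have hn' : (0 : ℝ) < n' := by exact_mod_cast hn'0
  have hd : (0 : ℝ) < n - n' := sub_pos.2 (by exact_mod_cast hn'n)
  have hp : 0 < 1 + t := by linarith
  have hq : 0 < 1 - t * n' / ((n : ℝ) - n') := by rw [sub_pos, div_lt_one hd]; exact htn
  set s := Finset.univ.map (Fin.castLEEmb hn'n.le)
  have hs : s.card = n' := by simp [s]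
  have hsc : sᶜ.card = n - n' := by simp [Finset.card_compl, hs]
  have hhead (x : Fin n → ℝ) : ∑ i ∈ s, x i ^ 2 = ∑ j : Fin n', x (Fin.castLE hn'n.le j) ^ 2 :=
    Finset.sum_map _ _ _
  have htail (x : Fin n → ℝ) : ∑ i ∈ sᶜ, x i ^ 2 = ∑ i, x i ^ 2 - ∑ i ∈ s, x i ^ 2 :=
    eq_sub_of_add_eq (Finset.sum_compl_add_sum s _)
  calc _ ≤ Measure.pi (fun _ : Fin n ↦ gaussianReal 0 1)
        {x | (∑ i ∈ s, x i ^ 2) / (1 + t) +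
          (∑ i ∈ sᶜ, x i ^ 2) / (1 - t * n' / ((n : ℝ) - n')) ≤ ∑ i, x i ^ 2} := by
        refine measure_mono fun x hx ↦ ?_
        simp only [Set.mem_ofPred_eq, htail, hhead] at hx ⊢
        set S := ∑ j : Fin n', x (Fin.castLE hn'n.le j) ^ 2
        set Q := ∑ i, x i ^ 2
        have hdt : 0 < (n : ℝ) - n' - t * n' := by linarith
        have key : Q - (S / (1 + t) + (Q - S) / (1 - t * n' / ((n : ℝ) - n'))) =
            n' / ((1 + t) * ((n : ℝ) - n' - t * n')) *
              (t * ((n : ℝ) / n' * S - (1 + t) * Q)) := by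
          field_simp
          ring
        have : 0 ≤ Q - (S / (1 + t) + (Q - S) / (1 - t * n' / ((n : ℝ) - n'))) :=
          key ▸ mul_nonneg (by positivity) hx
        linarith
    _ ≤ _ := measure_pi_gaussianReal_block_sum_sq_div_le_sum_sq s hp hq
    _ = _ := by
        rw [hs, hsc, rpow_div_two_eq_sqrt _ hp.le, rpow_div_two_eq_sqrt _ hq.le,
          ← Nat.cast_sub hn'n.le, rpow_natCast, rpow_natCast]

lemma ofReal_one_sub_sub_le_measure_of_compl_subset {α : Type*} [MeasurableSpace α]
    {μ : Measure α} [IsProbabilityMeasure μ] {E A B : Set α} {a b : ℝ} (ha : 0 ≤ a) (hb : 0 ≤ b)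
    (hsub : Eᶜ ⊆ A ∪ B) (hA : μ A ≤ ENNReal.ofReal a) (hB : μ B ≤ ENNReal.ofReal b) :
    ENNReal.ofReal (1 - a - b) ≤ μ E := by
  rw [sub_sub, ENNReal.ofReal_sub _ (add_nonneg ha hb), ENNReal.ofReal_one, tsub_le_iff_right,
    ENNReal.ofReal_add ha hb]
  calc 1 = μ Set.univ := measure_univ.symm
    _ ≤ μ E + μ Eᶜ := measure_univ_le_add_compl E
    _ ≤ μ E + (μ A + μ B) := add_le_add_right ((measure_mono hsub).trans (measure_union_le A B)) _
    _ ≤ μ E + (ENNReal.ofReal a + ENNReal.ofReal b) := by gcongr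

/-- For a standard Gaussian vector in `ℝⁿ`, the squared norm of the projection onto the
first `n'` coordinates, rescaled by `n/n'`, lies within relative error `δ` of the squared
norm of the full vector with the stated probability. -/
theorem gaussian_projection_bound {n n' : ℕ} (hn'0 : 0 < n') (hn'n : n' < n)
    {δ : ℝ} (hδ0 : 0 < δ) (hδ1 : δ < 1) (hδn : δ * n' < (n : ℝ) - n') :
    ENNReal.ofReal (1
        - (1 - δ) ^ ((n' : ℝ) / 2) * (1 + δ * n' / ((n : ℝ) - n')) ^ (((n : ℝ) - n') / 2)
        - (1 + δ) ^ ((n' : ℝ) / 2) * (1 - δ * n' / ((n : ℝ) - n')) ^ (((n : ℝ) - n') / 2)) ≤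
      (Measure.pi fun _ : Fin n => gaussianReal 0 1)
        {x : Fin n → ℝ |
          (1 - δ) * ∑ i, x i ^ 2 ≤
              (n : ℝ) / n' * ∑ j : Fin n', x (Fin.castLE hn'n.le j) ^ 2 ∧
          (n : ℝ) / n' * ∑ j : Fin n', x (Fin.castLE hn'n.le j) ^ 2 ≤
              (1 + δ) * ∑ i, x i ^ 2} := by
  have hd : (0 : ℝ) < n - n' := sub_pos.2 (by exact_mod_cast hn'n)
  have hlower := measure_pi_gaussianReal_head_tail_le hn'0 hn'n (t := -δ) (by linarith)
    ((neg_mul δ n').symm ▸ (neg_neg_of_pos (by positivity)).trans hd)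
  have hupper := measure_pi_gaussianReal_head_tail_le hn'0 hn'n (t := δ) (by linarith) hδn
  rw [← sub_eq_add_neg, neg_mul, neg_div, sub_neg_eq_add] at hlower
  refine ofReal_one_sub_sub_le_measure_of_compl_subset (by positivity) ?_ ?_ hlower hupper
  · have : 0 < 1 - δ * n' / ((n : ℝ) - n') := by rw [sub_pos, div_lt_one hd]; exact hδn
    positivity
  · intro x hx
    simp only [Set.mem_compl_iff, Set.mem_ofPred_eq, not_and_or, not_le, Set.mem_union] at hx ⊢
    rcases hx with hx | hx
    · exact .inl (mul_nonneg_of_nonpos_of_nonpos (by linarith) (by linarith))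
    · exact .inr (mul_nonneg hδ0.le (by linarith))
end

section
/- Let δ ∈ (0, 1/2), ε ∈ (0, 1), let m ≥ 2 be an integer, and let 0 < n' < n be integers with δ·n' < n − n' and n' ≥ 2(−ln ε + 2 ln m)/(δ²/2 − δ³/3). Then m(m−1)·max{(1−δ)^{n'/2}·(1 + δn'/(n−n'))^{(n−n')/2}, (1+δ)^{n'/2}·(1 − δn'/(n−n'))^{(n−n')/2}} ≤ ε. -/
/-!
Both terms are products `a ^ (n' / 2) * (1 ± t) ^ ((n - n') / 2)` with `t = δ n' / (n - n')`.
Bounding `log (1 ± t) ≤ ± t` turns each into `exp ((n' / 2) (log (1 ∓ δ) ± δ))`, and the Taylor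
bounds `log (1 - δ) ≤ -δ - δ² / 2`, `log (1 + δ) ≤ δ - δ² / 2 + δ³ / 3` make the exponent at most
`-(n' / 2) (δ² / 2 - δ³ / 3)`, which the dimension bound makes at most `log (ε / m²)`.
-/

open Real Set

namespace Real

theorem log_one_sub_le_neg_sub_sq_div_two {x : ℝ} (hx0 : 0 ≤ x) (hx1 : x < 1) :
    log (1 - x) ≤ -x - x ^ 2 / 2 := by
  have hseries := hasSum_pow_div_log_of_abs_lt_one (abs_lt.2 ⟨by linarith, hx1⟩)
  have hpartial := sum_le_hasSum (Finset.range 2) (fun i _ => by positivity) hseries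
  norm_num [Finset.sum_range_succ] at hpartial
  linarith

theorem log_one_add_le_cubic {x : ℝ} (hx : 0 ≤ x) :
    log (1 + x) ≤ x - x ^ 2 / 2 + x ^ 3 / 3 := by
  let f : ℝ → ℝ := fun y => y - y ^ 2 / 2 + y ^ 3 / 3 - log (1 + y)
  have hderiv : ∀ y, 0 ≤ y → HasDerivAt f (y ^ 3 / (1 + y)) y := by
    intro y hy
    have hy1 : 0 < 1 + y := by linarith
    refine ((((hasDerivAt_id' y).sub ((hasDerivAt_pow 2 y).div_const 2)).add
      ((hasDerivAt_pow 3 y).div_const 3)).sub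
      (((hasDerivAt_id' y).const_add 1).log hy1.ne')).congr_deriv ?_
    field_simp
    ring
  have hmono : MonotoneOn f (Ici 0) := by
    refine monotoneOn_of_hasDerivWithinAt_nonneg (f' := fun y => y ^ 3 / (1 + y)) (convex_Ici 0)
      (fun y hy => (hderiv y hy).continuousAt.continuousWithinAt) (fun y hy => ?_) (fun y hy => ?_)
    · rw [interior_Ici] at hy
      exact (hderiv y (le_of_lt hy)).hasDerivWithinAt
    · rw [interior_Ici] at hy
      exact div_nonneg (pow_nonneg (le_of_lt hy) 3) (by linarith [mem_Ioi.1 hy])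
  have hf0 : f 0 = 0 := by simp [f]
  have hfx : 0 ≤ x - x ^ 2 / 2 + x ^ 3 / 3 - log (1 + x) := hf0 ▸ hmono self_mem_Ici hx hx
  linarith

theorem rpow_mul_one_add_rpow_le_exp_neg_mul {a t c K x y : ℝ} (ha : 0 < a) (ht : -1 < t)
    (hx : 0 ≤ x) (hy : 0 ≤ y) (hty : t * y = c * x) (hlog : log a + c ≤ -K) :
    a ^ x * (1 + t) ^ y ≤ exp (-(x * K)) := by
  have ht1 : 0 < 1 + t := by linarith
  rw [rpow_def_of_pos ha, rpow_def_of_pos ht1, ← exp_add, exp_le_exp]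
  calc log a * x + log (1 + t) * y ≤ log a * x + t * y := by
        gcongr; linarith [log_le_sub_one_of_pos ht1]
    _ = (log a + c) * x := by rw [hty]; ring
    _ ≤ -K * x := by gcongr
    _ = -(x * K) := by ring

theorem exp_neg_half_mul_le_div_sq {ε M K N : ℝ} (hε : 0 < ε) (hM : 0 < M) (hK : 0 < K)
    (hN : 2 * (-log ε + 2 * log M) / K ≤ N) : exp (-(N / 2 * K)) ≤ ε / M ^ 2 := by
  have hlog : log (ε / M ^ 2) = log ε - 2 * log M := by
    rw [log_div hε.ne' (by positivity), log_pow]; push_cast; ring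
  rw [← exp_log (show 0 < ε / M ^ 2 by positivity), exp_le_exp, hlog]
  rw [div_le_iff₀ hK] at hN
  linarith

end Real

theorem union_bound_below_epsilon_general {δ ε : ℝ} (hδ0 : 0 < δ) (hδ : δ < 1 / 2)
    (hε0 : 0 < ε) {m n n' : ℕ} (hm : 2 ≤ m)
    (hδn : δ * n' < (n : ℝ) - n')
    (hn' : 2 * (-Real.log ε + 2 * Real.log m) / (δ ^ 2 / 2 - δ ^ 3 / 3) ≤ (n' : ℝ)) :
    (m : ℝ) * (m - 1) * max
        ((1 - δ) ^ ((n' : ℝ) / 2) * (1 + δ * n' / ((n : ℝ) - n')) ^ (((n : ℝ) - n') / 2))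
        ((1 + δ) ^ ((n' : ℝ) / 2) * (1 - δ * n' / ((n : ℝ) - n')) ^ (((n : ℝ) - n') / 2))
      ≤ ε := by
  set s : ℝ := n - n'
  set t : ℝ := δ * n' / s
  set K : ℝ := δ ^ 2 / 2 - δ ^ 3 / 3
  have hm1 : (1 : ℝ) ≤ m := by exact_mod_cast (by omega : 1 ≤ m)
  have hs : 0 < s := lt_of_le_of_lt (by positivity) hδn
  have ht0 : 0 ≤ t := div_nonneg (by positivity) hs.le
  have ht1 : t < 1 := (div_lt_one hs).2 hδn
  have hts : t * (s / 2) = δ * (n' / 2) := by simp only [t]; field_simp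
  have hK : 0 < K := by simp only [K]; nlinarith [pow_pos hδ0 2]
  have hexp := exp_neg_half_mul_le_div_sq hε0 (by linarith) hK hn'
  have hlogA : log (1 - δ) + δ ≤ -K := by
    have := log_one_sub_le_neg_sub_sq_div_two hδ0.le (by linarith)
    simp only [K]; linarith [pow_pos hδ0 3]
  have hlogB : log (1 + δ) - δ ≤ -K := by
    have := log_one_add_le_cubic hδ0.le
    simp only [K]; linarith
  have hA : (1 - δ) ^ ((n' : ℝ) / 2) * (1 + t) ^ (s / 2) ≤ exp (-((n' : ℝ) / 2 * K)) :=
    rpow_mul_one_add_rpow_le_exp_neg_mul (by linarith) (by linarith) (by positivity)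
      (half_pos hs).le hts hlogA
  have hB : (1 + δ) ^ ((n' : ℝ) / 2) * (1 - t) ^ (s / 2) ≤ exp (-((n' : ℝ) / 2 * K)) := by
    rw [sub_eq_add_neg]
    exact rpow_mul_one_add_rpow_le_exp_neg_mul (c := -δ) (by linarith) (by linarith)
      (by positivity) (half_pos hs).le (by rw [neg_mul, hts, neg_mul]) (by linarith)
  calc (m : ℝ) * (m - 1) * max _ _ ≤ m * (m - 1) * (ε / m ^ 2) := by
        refine mul_le_mul_of_nonneg_left ?_ (by nlinarith)
        exact max_le (hA.trans hexp) (hB.trans hexp)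
    _ ≤ ε := by
        rw [mul_div_assoc', div_le_iff₀ (by positivity)]
        nlinarith

/-- The analytic core of the set version of the Johnson–Lindenstrauss lemma: the dimension
bound on `n'` forces the union-bound failure probability below `ε`. -/
theorem union_bound_below_epsilon {δ ε : ℝ} (hδ0 : 0 < δ) (hδ : δ < 1 / 2)
    (hε0 : 0 < ε) (hε1 : ε < 1) {m n n' : ℕ} (hm : 2 ≤ m) (hn'0 : 0 < n') (hn'n : n' < n)
    (hδn : δ * n' < (n : ℝ) - n')
    (hn' : 2 * (-Real.log ε + 2 * Real.log m) / (δ ^ 2 / 2 - δ ^ 3 / 3) ≤ (n' : ℝ)) :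
    (m : ℝ) * (m - 1) * max
        ((1 - δ) ^ ((n' : ℝ) / 2) * (1 + δ * n' / ((n : ℝ) - n')) ^ (((n : ℝ) - n') / 2))
        ((1 + δ) ^ ((n' : ℝ) / 2) * (1 - δ * n' / ((n : ℝ) - n')) ^ (((n : ℝ) - n') / 2))
      ≤ ε :=
  union_bound_below_epsilon_general hδ0 hδ hε0 hm hδn hn'
end
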